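/- arXiv:0804.4548 — 2 statements merged into one kernel-verified Lean document; each statement's English description precedes it below -/
import Mathlib

section
/- Assuming CH, there exists a function f : [ω₁]² → ω₁ such that (1) for every countably infinite A ⊆ ω₁ and every uncountable B ⊆ ω₁ and every ν < ω₁, there exist α ∈ A and β ∈ B with α < β and f({α,β}) = ν (so f establishes ω₁ ↛ [(ω;ω₁)]²_{ω₁}), and (2) there is no uncountable set X ⊆ ω₁ such that f restricted to [X]² is injective. -/
noncomputable section
open Set

/-- The first uncountable ordinal `ω₁`. -/
def w1 : Ordinal.{0} := (Cardinal.aleph 1).ord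

/-- `X` is a rainbow set for the pair-colouring `f`: `f` is one-to-one on the pairs from `X`. -/
def IsRainbow (f : Ordinal.{0} → Ordinal.{0} → Ordinal.{0}) (X : Set Ordinal.{0}) : Prop :=
  ∀ a ∈ X, ∀ b ∈ X, ∀ a' ∈ X, ∀ b' ∈ X,
    a < b → a' < b' → f a b = f a' b' → a = a' ∧ b = b'

open scoped Cardinal

open Cardinal Classical in
private lemma w1_pos : (0 : Ordinal) < w1 := by
  rw [w1, Cardinal.lt_ord, Ordinal.card_zero]
  exact aleph_pos 1

private lemma w1_isLimit : Order.IsSuccLimit w1 :=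
  Cardinal.isSuccLimit_ord (le_of_lt Cardinal.aleph0_lt_aleph_one)

private lemma countable_Iio_of_lt_w1 {s : Ordinal.{0}} (hs : s < w1) : (Set.Iio s).Countable := by
  rw [Cardinal.countable_iff_lt_aleph_one, Ordinal.mk_Iio_ordinal]
  have h1 : s.card < Cardinal.aleph 1 := Cardinal.lt_ord.mp hs
  calc Cardinal.lift.{1} s.card < Cardinal.lift.{1} (Cardinal.aleph 1) :=
        Cardinal.lift_lt.mpr h1
    _ = Cardinal.aleph 1 := by rw [Cardinal.lift_aleph, Ordinal.lift_one]

private lemma bounded_of_countable {A : Set Ordinal.{0}} (hA : A.Countable)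
    (hsub : A ⊆ Iio w1) : ∃ s < w1, A ⊆ Iio s := by
  rcases A.eq_empty_or_nonempty with rfl | hne
  · exact ⟨0, w1_pos, by simp⟩
  obtain ⟨g, hg⟩ := hA.exists_eq_range hne
  have hglt : ∀ n, g n < w1 := fun n => hsub (hg ▸ mem_range_self n)
  have hsup : (⨆ n, g n) < w1 := by
    refine Ordinal.iSup_lt_ord ?_ hglt
    rw [w1, Cardinal.isRegular_aleph_one.cof_eq, Cardinal.mk_nat]
    exact Cardinal.aleph0_lt_aleph_one
  refine ⟨(⨆ n, g n) + 1, ?_, ?_⟩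
  · rw [← Order.succ_eq_add_one]
    exact w1_isLimit.succ_lt hsup
  · intro a ha
    rw [hg] at ha
    obtain ⟨n, rfl⟩ := ha
    exact lt_of_le_of_lt (Ordinal.le_iSup g n) (lt_add_one _)

def GoodPair (p : Set Ordinal.{0} × Ordinal.{0}) : Prop :=
  p.1 ⊆ Iio w1 ∧ p.1.Countable ∧ p.1.Infinite ∧ p.2 < w1

private lemma mk_Iio_w1 : #(Iio w1) = Cardinal.lift.{1,0} (Cardinal.aleph 1) := by
  rw [Ordinal.mk_Iio_ordinal, w1, Cardinal.card_ord]

private lemma exists_enum (hCH : Cardinal.continuum.{0} = Cardinal.aleph 1) :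
    ∃ E : Ordinal.{0} → Set Ordinal.{0} × Ordinal.{0},
      ∀ p, GoodPair p → ∃ ξ < w1, E ξ = p := by
  classical
  set L : Cardinal.{1} := Cardinal.lift.{1,0} (Cardinal.aleph 1) with hL
  have hal : Cardinal.aleph0.{1} ≤ L := by
    rw [hL, ← Cardinal.lift_aleph0.{1,0}]
    exact Cardinal.lift_le.mpr (le_of_lt Cardinal.aleph0_lt_aleph_one)
  -- the subtype of countable subsets of Iio w1
  have hS : #{t : Set Ordinal.{0} // t ⊆ Iio w1 ∧ #t ≤ Cardinal.aleph0} ≤ L := by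
    refine le_trans (Cardinal.mk_bounded_subset_le (Iio w1) Cardinal.aleph0) ?_
    rw [mk_Iio_w1, max_eq_left hal]
    rw [hL, ← Cardinal.lift_aleph0.{1,0}, ← Cardinal.lift_power.{0,1}, Cardinal.lift_le.{1,0}]
    rw [← hCH, Cardinal.continuum_power_aleph0, hCH]
  have hT : #{p : Set Ordinal.{0} × Ordinal.{0} // GoodPair p} ≤ #(Iio w1) := by
    have emb : {p : Set Ordinal.{0} × Ordinal.{0} // GoodPair p} ↪
        ({t : Set Ordinal.{0} // t ⊆ Iio w1 ∧ #t ≤ Cardinal.aleph0} × (Iio w1)) := by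
      refine ⟨fun p => (⟨p.1.1, p.2.1, ?_⟩, ⟨p.1.2, p.2.2.2.2⟩), ?_⟩
      · exact Cardinal.mk_le_aleph0_iff.mpr p.2.2.1.to_subtype
      · rintro ⟨⟨A, ν⟩, h⟩ ⟨⟨A', ν'⟩, h'⟩ e
        simp only [Prod.mk.injEq, Subtype.mk.injEq] at e
        simpa [Prod.ext_iff, e.1] using congrArg Subtype.val e.2
    refine le_trans (Cardinal.mk_le_of_injective emb.2) ?_
    rw [Cardinal.mk_prod, Cardinal.lift_id, Cardinal.lift_id, mk_Iio_w1]
    calc _ ≤ L * L := mul_le_mul' hS le_rfl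
      _ = L := Cardinal.mul_eq_self hal
  obtain ⟨j⟩ := Cardinal.le_def _ _ |>.mp hT
  refine ⟨fun ξ => if h : ∃ t, ((j t : Iio w1) : Ordinal) = ξ then (Classical.choose h).1
    else (∅, 0), ?_⟩
  intro p hp
  refine ⟨(j ⟨p, hp⟩ : Iio w1), (j ⟨p, hp⟩).2, ?_⟩
  have h : ∃ t, ((j t : Iio w1) : Ordinal) = ((j ⟨p, hp⟩ : Iio w1) : Ordinal) := ⟨⟨p, hp⟩, rfl⟩
  simp only [dif_pos h]
  have := Classical.choose_spec h
  have : Classical.choose h = ⟨p, hp⟩ := j.injective (Subtype.coe_injective this)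
  rw [this]

section Column
open scoped Classical
variable (E : Ordinal.{0} → Set Ordinal.{0} × Ordinal.{0})

/-- The demands handled at column `β`. -/
def Dset (β : Ordinal.{0}) : Set Ordinal.{0} :=
  {ξ | ξ < β ∧ GoodPair (E ξ) ∧ (E ξ).1 ⊆ Iio β}

/-- An injection (on `Iio β`) into `ℕ`, for countable `β`. -/
def gfun (β : Ordinal.{0}) : Ordinal.{0} → ℕ :=
  if h : (Set.Iio β).Countable then Classical.choose (Set.countable_iff_exists_injOn.mp h)
  else fun _ => 0

lemma gfun_injOn {β : Ordinal.{0}} (h : (Set.Iio β).Countable) :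
    Set.InjOn (gfun β) (Set.Iio β) := by
  rw [gfun, dif_pos h]
  exact Classical.choose_spec (Set.countable_iff_exists_injOn.mp h)

/-- The demand assigned to slot `n` at column `β`, if any. -/
def dem (β : Ordinal.{0}) (n : ℕ) : Option Ordinal.{0} :=
  if h : ∃ ξ ∈ Dset E β, gfun β ξ = n then some (Classical.choose h) else none

lemma dem_mem {β : Ordinal.{0}} {n : ℕ} {ξ : Ordinal.{0}} (h : dem E β n = some ξ) :
    ξ ∈ Dset E β := by
  rw [dem] at h
  split_ifs at h with h'
  · obtain ⟨hmem, _⟩ := Classical.choose_spec h'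
    rwa [← Option.some_inj.mp h]

lemma dem_eq {β : Ordinal.{0}} {ξ : Ordinal.{0}} (hβ : (Set.Iio β).Countable)
    (hξ : ξ ∈ Dset E β) : dem E β (gfun β ξ) = some ξ := by
  have h' : ∃ ζ ∈ Dset E β, gfun β ζ = gfun β ξ := ⟨ξ, hξ, rfl⟩
  rw [dem, dif_pos h']
  obtain ⟨hmem, heq⟩ := Classical.choose_spec h'
  exact congrArg some (gfun_injOn hβ hmem.1 hξ.1 heq)

/-- Already-picked values below slot `n`. -/
def avoid (prev : ℕ → Option Ordinal.{0}) (n : ℕ) : Set Ordinal.{0} :=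
  {a | ∃ m < n, prev m = some a}

/-- Iterated construction of the picks at column `β`. -/
def pickAux (β : Ordinal.{0}) : ℕ → ℕ → Option Ordinal.{0}
  | 0 => fun _ => none
  | n + 1 => Function.update (pickAux β n) n
      ((dem E β n).map fun ξ => sInf ((E ξ).1 \ avoid (pickAux β n) n))

/-- The pick at slot `n` of column `β`. -/
def pick (β : Ordinal.{0}) (n : ℕ) : Option Ordinal.{0} := pickAux E β (n + 1) n

lemma pickAux_stable {β : Ordinal.{0}} : ∀ {n m : ℕ}, m < n →
    pickAux E β n m = pick E β m := by
  intro n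
  induction n with
  | zero => intro m hm; exact absurd hm (Nat.not_lt_zero m)
  | succ n ih =>
    intro m hm
    by_cases h : m = n
    · subst h; rfl
    · have hmn : m < n := lt_of_le_of_ne (Nat.lt_succ_iff.mp hm) h
      rw [pickAux, Function.update_of_ne h, ih hmn]

lemma pick_eq (β : Ordinal.{0}) (n : ℕ) :
    pick E β n = (dem E β n).map fun ξ => sInf ((E ξ).1 \ avoid (pick E β) n) := by
  have h1 : pick E β n = (dem E β n).map
      fun ξ => sInf ((E ξ).1 \ avoid (pickAux E β n) n) := by
    show pickAux E β (n + 1) n = _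
    rw [pickAux, Function.update_self]
  have h2 : avoid (pickAux E β n) n = avoid (pick E β) n := by
    ext a
    constructor
    · rintro ⟨m, hm, hp⟩; exact ⟨m, hm, by rwa [pickAux_stable E hm] at hp⟩
    · rintro ⟨m, hm, hp⟩; exact ⟨m, hm, by rwa [pickAux_stable E hm]⟩
  rwa [h2] at h1

lemma avoid_finite (β : Ordinal.{0}) (n : ℕ) : (avoid (pick E β) n).Finite := by
  have : avoid (pick E β) n ⊆ ⋃ m ∈ Finset.range n, {a | pick E β m = some a} := by
    rintro a ⟨m, hm, hp⟩
    exact Set.mem_biUnion (Finset.mem_range.mpr hm) hp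
  refine Set.Finite.subset (Set.Finite.biUnion (Finset.range n).finite_toSet fun m _ => ?_) this
  exact Set.subsingleton_of_forall_eq ((pick E β m).getD 0) (fun a ha => by
    simp only [mem_setOf_eq] at ha; rw [ha]; rfl) |>.finite

lemma pick_mem {β : Ordinal.{0}} {n : ℕ} {ξ : Ordinal.{0}} (h : dem E β n = some ξ) :
    ∃ a, pick E β n = some a ∧ (a ∈ (E ξ).1 ∧ a ∉ avoid (pick E β) n) := by
  have hinf : (E ξ).1.Infinite := (dem_mem E h).2.1.2.2.1
  have hne : ((E ξ).1 \ avoid (pick E β) n).Nonempty :=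
    (hinf.diff (avoid_finite E β n)).nonempty
  refine ⟨sInf ((E ξ).1 \ avoid (pick E β) n), ?_, csInf_mem hne⟩
  rw [pick_eq, h, Option.map_some]

lemma pick_inj {β : Ordinal.{0}} {n m : ℕ} {a : Ordinal.{0}}
    (hn : pick E β n = some a) (hm : pick E β m = some a) : n = m := by
  have key : ∀ {n m : ℕ}, m < n → pick E β n = some a → pick E β m = some a → False := by
    intro n m hmn hn hm
    rw [pick_eq] at hn
    cases hd : dem E β n with
    | none => rw [hd] at hn; simp at hn
    | some ξ =>
      rw [hd, Option.map_some] at hn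
      have hinf : (E ξ).1.Infinite := (dem_mem E hd).2.1.2.2.1
      have hne : ((E ξ).1 \ avoid (pick E β) n).Nonempty :=
        (hinf.diff (avoid_finite E β n)).nonempty
      have := csInf_mem hne
      rw [Option.some_inj.mp hn] at this
      exact this.2 ⟨m, hmn, hm⟩
  rcases Nat.lt_trichotomy n m with h | h | h
  · exact absurd (key h hm hn) not_false
  · exact h
  · exact absurd (key h hn hm) not_false

/-- The colour at slot `n` of column `β`. -/
def colf (β : Ordinal.{0}) (n : ℕ) : Ordinal.{0} :=
  ((dem E β n).map fun ξ => (E ξ).2).getD 0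

/-- The colouring. -/
def fcol (α β : Ordinal.{0}) : Ordinal.{0} :=
  if h : ∃ n, pick E β n = some α then colf E β (Classical.choose h) else 0

lemma fcol_lt (α β : Ordinal.{0}) : fcol E α β < w1 := by
  rw [fcol]
  split_ifs with h
  · rw [colf]
    cases hd : dem E β (Classical.choose h) with
    | none => simpa using w1_pos
    | some ξ => simpa using (dem_mem E hd).2.1.2.2.2
  · exact w1_pos

lemma fcol_hit {β ξ : Ordinal.{0}} (hβ : (Set.Iio β).Countable) (hξ : ξ ∈ Dset E β) :
    ∃ α ∈ (E ξ).1, α < β ∧ fcol E α β = (E ξ).2 := by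
  have hd := dem_eq E hβ hξ
  obtain ⟨a, hp, haA, _⟩ := pick_mem E hd
  refine ⟨a, haA, hξ.2.2 haA, ?_⟩
  have hex : ∃ n, pick E β n = some a := ⟨gfun β ξ, hp⟩
  rw [fcol, dif_pos hex]
  have hspec := Classical.choose_spec hex
  rw [pick_inj E hspec hp, colf, hd, Option.map_some, Option.getD_some]

end Column

private lemma coverP {E : Ordinal.{0} → Set Ordinal.{0} × Ordinal.{0}}
    (hE : ∀ p, GoodPair p → ∃ ξ < w1, E ξ = p)
    {A : Set Ordinal.{0}} (hA1 : A ⊆ Iio w1) (hA2 : A.Countable) (hA3 : A.Infinite)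
    {ν : Ordinal.{0}} (hν : ν < w1) :
    ∃ S < w1, ∀ β, S ≤ β → β < w1 → ∃ α ∈ A, α < β ∧ fcol E α β = ν := by
  obtain ⟨ξ, hξ, hEξ⟩ := hE (A, ν) ⟨hA1, hA2, hA3, hν⟩
  obtain ⟨s, hs, hAs⟩ := bounded_of_countable hA2 hA1
  refine ⟨max (ξ + 1) s, max_lt (by rw [← Order.succ_eq_add_one]; exact w1_isLimit.succ_lt hξ) hs,
    fun β hSβ hβ => ?_⟩
  have hξβ : ξ < β := lt_of_lt_of_le (lt_of_lt_of_le (lt_add_one ξ) (le_max_left _ _)) hSβ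
  have hmem : ξ ∈ Dset E β := by
    refine ⟨hξβ, by rw [hEξ]; exact ⟨hA1, hA2, hA3, hν⟩, ?_⟩
    rw [hEξ]
    exact fun a ha => lt_of_lt_of_le (hAs ha) (le_trans (le_max_right _ _) hSβ)
  obtain ⟨α, hαA, hαβ, hf⟩ := fcol_hit E (countable_Iio_of_lt_w1 hβ) hmem
  rw [hEξ] at hαA hf
  exact ⟨α, hαA, hαβ, hf⟩

/-- Assuming CH, there is a colouring `f : [ω₁]² → ω₁` which
establishes `ω₁ ↛ [(ω;ω₁)]²_{ω₁}` (every colour `ν < ω₁` appears on a pair `{α,β}` with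
`α ∈ A`, `β ∈ B`, `α < β`, whenever `A` is countably infinite and `B` is uncountable),
yet there is no uncountable `f`-rainbow set. -/
theorem ch_exists_colouring_no_uncountable_rainbow
    (hCH : Cardinal.continuum.{0} = Cardinal.aleph 1) :
    ∃ f : Ordinal.{0} → Ordinal.{0} → Ordinal.{0},
      (∀ α β, α < β → β < w1 → f α β < w1) ∧
      (∀ A : Set Ordinal.{0}, A ⊆ Iio w1 → A.Countable → A.Infinite →
        ∀ B : Set Ordinal.{0}, B ⊆ Iio w1 → ¬ B.Countable →
          ∀ ν < w1, ∃ α ∈ A, ∃ β ∈ B, α < β ∧ f α β = ν) ∧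
      ¬ ∃ X : Set Ordinal.{0}, X ⊆ Iio w1 ∧ ¬ X.Countable ∧ IsRainbow f X := by
  classical
  obtain ⟨E, hE⟩ := exists_enum hCH
  refine ⟨fcol E, fun α β _ _ => fcol_lt E α β, ?_, ?_⟩
  · intro A hA1 hA2 hA3 B hB1 hB2 ν hν
    obtain ⟨S, hS, hcov⟩ := coverP hE hA1 hA2 hA3 hν
    have : ¬ B ⊆ Iio S := fun hsub => hB2 ((countable_Iio_of_lt_w1 hS).mono hsub)
    obtain ⟨β, hβB, hβS⟩ := not_subset.mp this
    obtain ⟨α, hαA, hαβ, hf⟩ := hcov β (not_lt.mp hβS) (hB1 hβB)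
    exact ⟨α, hαA, β, hβB, hαβ, hf⟩
  · rintro ⟨X, hX1, hX2, hrb⟩
    have hXinf : X.Infinite := fun hfin => hX2 hfin.countable
    set e := hXinf.natEmbedding with he
    set A : Set Ordinal.{0} := Set.range (fun n => (e n : Ordinal.{0})) with hA
    have hAX : A ⊆ X := by rintro a ⟨n, rfl⟩; exact (e n).2
    have hA2 : A.Countable := countable_range _
    have hA3 : A.Infinite := Set.infinite_range_of_injective
      (fun a b h => e.injective (Subtype.ext h))
    obtain ⟨S, hS, hcov⟩ := coverP hE (hAX.trans hX1) hA2 hA3 w1_pos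
    set X' : Set Ordinal.{0} := X \ Iio S with hX'
    have hX'2 : ¬ X'.Countable := by
      intro hc
      exact hX2 (((hc.union (countable_Iio_of_lt_w1 hS)).mono) fun x hx => by
        by_cases h : x < S
        · exact Or.inr h
        · exact Or.inl ⟨hx, h⟩)
    have hhit : ∀ β ∈ X', ∃ α, α ∈ A ∧ α < β ∧ fcol E α β = 0 := by
      rintro β ⟨hβX, hβS⟩
      obtain ⟨α, h1, h2, h3⟩ := hcov β (not_lt.mp hβS) (hX1 hβX)
      exact ⟨α, h1, h2, h3⟩
    set φ : Ordinal.{0} → Ordinal.{0} := fun β =>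
      if h : ∃ α, α ∈ A ∧ α < β ∧ fcol E α β = 0 then Classical.choose h else 0 with hφ
    have hφspec : ∀ β ∈ X', φ β ∈ A ∧ φ β < β ∧ fcol E (φ β) β = 0 := by
      intro β hβ
      rw [hφ]
      simp only [dif_pos (hhit β hβ)]
      exact Classical.choose_spec (hhit β hβ)
    have hni : ¬ Set.InjOn φ X' := by
      intro hinj
      exact hX'2 (Set.MapsTo.countable_of_injOn (fun β hβ => (hφspec β hβ).1) hinj hA2)
    rw [Set.InjOn] at hni
    push_neg at hni
    obtain ⟨β, hβ, β', hβ', heq, hne⟩ := hni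
    obtain ⟨hαA, hαβ, hf⟩ := hφspec β hβ
    obtain ⟨hαA', hαβ', hf'⟩ := hφspec β' hβ'
    rw [heq] at hαβ hf
    have := hrb (φ β') (hAX hαA') β (Set.diff_subset hβ) (φ β') (hAX hαA') β'
      (Set.diff_subset hβ') hαβ hαβ' (hf.trans hf'.symm)
    exact hne this.2
end
end

section
/- Let f be an AR^(k)-function on ω₁ and let κ be a large enough regular cardinal with well-ordered structure H_κ. If ⟨N_m : m ≤ n⟩ is a chain of countable elementary submodels of H_κ (with N_m ∈ N_{m+1}), f ∈ N_0, D⃗_0, …, D⃗_{n-1} ∈ SEQ_k(ω, ω₁) ∩ N_0, and α_m ∈ N_{m+1} \ N_m for m < n, then the set {i < ω : ∀ m < n, α_m ∈ Homo(D⃗_m(i), f)} is infinite. -/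
noncomputable section
open Set FirstOrder

def toZF : Ordinal.{0} → ZFSet.{0} :=
  Ordinal.lt_wf.fix (C := fun _ => ZFSet.{0}) fun o ih =>
    ZFSet.range fun i : Shrink (Iio o) =>
      ih ((equivShrink (Iio o)).symm i) ((equivShrink (Iio o)).symm i).2

def SetLang : Language := ⟨fun _ => Empty, fun n => match n with | 2 => Bool | _ => Empty⟩

def setStruct (prec : ZFSet.{0} → ZFSet.{0} → Prop) : SetLang.Structure ZFSet.{0} where
  funMap := fun {_} f _ => Empty.elim f
  RelMap := fun {n} r x =>
    match n, r, x with
    | 2, true, x => x 0 ∈ x 1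
    | 2, false, x => prec (x 0) (x 1)

abbrev ESub (prec : ZFSet.{0} → ZFSet.{0} → Prop) : Type 1 :=
  @Language.ElementarySubstructure SetLang ZFSet.{0} (setStruct prec)

def carr {prec : ZFSet.{0} → ZFSet.{0} → Prop} (N : ESub prec) : Set ZFSet.{0} :=
  letI := setStruct prec
  N.toSubstructure.carrier

def ctblToZF (s : Set ZFSet.{0}) (hs : s.Countable) : ZFSet.{0} :=
  letI : Countable s := hs.to_subtype
  ZFSet.range fun i : Shrink.{0} s => ((equivShrink.{0} s).symm i : ZFSet)

def fun2ToZF (f : Ordinal.{0} → Ordinal.{0} → Ordinal.{0}) : ZFSet.{0} :=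
  ZFSet.range fun p : Shrink (Iio w1) × Shrink (Iio w1) =>
    ZFSet.pair
      (ZFSet.pair (toZF ((equivShrink (Iio w1)).symm p.1))
        (toZF ((equivShrink (Iio w1)).symm p.2)))
      (toZF (f ((equivShrink (Iio w1)).symm p.1) ((equivShrink (Iio w1)).symm p.2)))

def finsetToZF (s : Finset Ordinal.{0}) : ZFSet.{0} :=
  ZFSet.range fun i : Shrink.{0} {x // x ∈ s} => toZF ((equivShrink.{0} {x // x ∈ s}).symm i : {x // x ∈ s})

def famToZF (D : Finset (Finset Ordinal.{0})) : ZFSet.{0} :=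
  ZFSet.range fun i : Shrink.{0} {x // x ∈ D} => finsetToZF ((equivShrink.{0} {x // x ∈ D}).symm i : {x // x ∈ D})

def seqToZF (D : ℕ → Finset (Finset Ordinal.{0})) : ZFSet.{0} :=
  ZFSet.range fun n : ℕ => ZFSet.pair (toZF n) (famToZF (D n))
/-- `f` (as a colouring of pairs `{α,β}`, `α < β`, of ordinals below `ω₁`) is `k`-bounded:
every colour class has at most `k` pairs. -/
def kBdd (k : ℕ) (f : Ordinal.{0} → Ordinal.{0} → Ordinal.{0}) : Prop :=
  ∀ γ : Ordinal.{0},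
    Cardinal.mk {p : Ordinal.{0} × Ordinal.{0} // p.1 < p.2 ∧ p.2 < w1 ∧ f p.1 p.2 = γ} ≤ k

/-- `Homo(D, f)`: the set of `α` such that for each `d ∈ D`, the colouring `f(·, α)` is
constant on the elements of `d` below `α`. -/
def HomoSet (D : Finset (Finset Ordinal.{0})) (f : Ordinal.{0} → Ordinal.{0} → Ordinal.{0}) :
    Set Ordinal.{0} :=
  {α | ∀ d ∈ D, ∀ δ ∈ d, ∀ δ' ∈ d, δ < α → δ' < α → f δ α = f δ' α}

/-- `D` is a member of `SEQ_k(ω, ω₁)`: an `ω`-sequence of finite families of pairwise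
disjoint `k`-element subsets of `ω₁`, whose unions are pairwise disjoint. -/
def IsSeqK (k : ℕ) (D : ℕ → Finset (Finset Ordinal.{0})) : Prop :=
  (∀ i, ∀ d ∈ D i, d.card = k ∧ ∀ δ ∈ d, δ < w1) ∧
  (∀ i, ∀ d ∈ D i, ∀ d' ∈ D i, d ≠ d' → ∀ δ ∈ d, δ ∉ d') ∧
  (∀ i j : ℕ, i ≠ j → ∀ d ∈ D i, ∀ d' ∈ D j, ∀ δ ∈ d, δ ∉ d')

/-- `f` is an `AR^(k)`-function: it is `k`-bounded, and for every sequence in `SEQ_k(ω,ω₁)`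
some tail of `ω₁` is covered by the corresponding `Homo` sets. -/
def IsAR (k : ℕ) (f : Ordinal.{0} → Ordinal.{0} → Ordinal.{0}) : Prop :=
  kBdd k f ∧
  ∀ D : ℕ → Finset (Finset Ordinal.{0}), IsSeqK k D →
    ∃ γ < w1, ∀ α, γ ≤ α → α < w1 → ∃ i, α ∈ HomoSet (D i) f


theorem zf_mem_toSet (a u : ZFSet.{0}) : a ∈ u.toSet ↔ a ∈ u := Iff.rfl

theorem mem_toZF {x : ZFSet.{0}} {o : Ordinal.{0}} :
    x ∈ toZF o ↔ ∃ b < o, toZF b = x := by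
  rw [toZF, WellFounded.fix_eq]
  rw [← toZF]
  simp only [ZFSet.mem_range, Set.mem_range]
  constructor
  · rintro ⟨i, hi⟩
    exact ⟨_, ((equivShrink (Iio o)).symm i).2, by rw [← hi]⟩
  · rintro ⟨b, hb, hx⟩
    exact ⟨equivShrink (Iio o) ⟨b, hb⟩, by simp [← hx]⟩

theorem toZF_mem_toZF {a b : Ordinal.{0}} (h : a < b) : toZF a ∈ toZF b :=
  mem_toZF.2 ⟨a, h, rfl⟩

theorem toZF_injective : Function.Injective toZF := by
  intro a b
  induction a using Ordinal.lt_wf.induction generalizing b with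
  | _ a ih =>
  intro h
  by_contra hne
  rcases lt_or_gt_of_ne hne with hl | hl
  · have := toZF_mem_toZF hl
    rw [h] at this
    exact ZFSet.mem_irrefl _ this
  · have := toZF_mem_toZF hl
    rw [h] at this
    exact ZFSet.mem_irrefl _ this

@[simp] theorem toZF_mem_iff {a b : Ordinal.{0}} : toZF a ∈ toZF b ↔ a < b := by
  refine ⟨fun h => ?_, toZF_mem_toZF⟩
  rcases mem_toZF.1 h with ⟨c, hc, hc2⟩
  rwa [← toZF_injective hc2]

@[simp] theorem toZF_inj {a b : Ordinal.{0}} : toZF a = toZF b ↔ a = b :=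
  toZF_injective.eq_iff

theorem toZF_zero : toZF 0 = ∅ := by
  apply ZFSet.ext; intro z
  simp only [mem_toZF, ZFSet.notMem_empty, iff_false]
  rintro ⟨b, hb, _⟩
  exact (not_lt_of_ge (zero_le (a := b)) hb)

theorem lt_add_one_iff' {a o : Ordinal.{0}} : a < o + 1 ↔ a ≤ o := by
  rw [Ordinal.add_one_eq_succ, Order.lt_succ_iff]

theorem toZF_succ (o : Ordinal.{0}) : toZF (o + 1) = insert (toZF o) (toZF o) := by
  apply ZFSet.ext; intro z
  simp only [mem_toZF, ZFSet.mem_insert_iff]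
  constructor
  · rintro ⟨b, hb, rfl⟩
    rcases lt_or_eq_of_le (lt_add_one_iff'.1 hb) with h | h
    · exact Or.inr ⟨b, h, rfl⟩
    · exact Or.inl (by rw [h])
  · rintro (h | h)
    · exact ⟨o, lt_add_one_iff'.2 le_rfl, h.symm⟩
    · rcases h with ⟨b, hb, hb2⟩
      exact ⟨b, hb.trans (lt_add_one_iff'.2 le_rfl), hb2⟩



theorem mem_ctblToZF {s : Set ZFSet.{0}} {hs : s.Countable} {x : ZFSet.{0}} :
    x ∈ ctblToZF s hs ↔ x ∈ s := by
  letI : Countable s := hs.to_subtype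
  rw [ctblToZF]
  simp only [ZFSet.mem_range, Set.mem_range]
  constructor
  · rintro ⟨i, rfl⟩
    exact ((equivShrink.{0} s).symm i).2
  · intro hx
    exact ⟨equivShrink.{0} s ⟨x, hx⟩, by simp⟩

theorem mem_fun2ToZF {f : Ordinal.{0} → Ordinal.{0} → Ordinal.{0}} {x : ZFSet.{0}} :
    x ∈ fun2ToZF f ↔ ∃ a, ∃ b, a < w1 ∧ b < w1 ∧
      x = ZFSet.pair (ZFSet.pair (toZF a) (toZF b)) (toZF (f a b)) := by
  rw [fun2ToZF]
  simp only [ZFSet.mem_range, Set.mem_range]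
  constructor
  · rintro ⟨⟨i, j⟩, rfl⟩
    exact ⟨_, _, ((equivShrink (Iio w1)).symm i).2, ((equivShrink (Iio w1)).symm j).2, rfl⟩
  · rintro ⟨a, b, ha, hb, rfl⟩
    exact ⟨⟨equivShrink (Iio w1) ⟨a, ha⟩, equivShrink (Iio w1) ⟨b, hb⟩⟩, by simp⟩

theorem mem_finsetToZF {s : Finset Ordinal.{0}} {x : ZFSet.{0}} :
    x ∈ finsetToZF s ↔ ∃ δ ∈ s, toZF δ = x := by
  rw [finsetToZF]
  simp only [ZFSet.mem_range, Set.mem_range]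
  constructor
  · rintro ⟨i, rfl⟩
    exact ⟨_, ((equivShrink.{0} {x // x ∈ s}).symm i).2, rfl⟩
  · rintro ⟨d, hd, rfl⟩
    exact ⟨equivShrink.{0} {x // x ∈ s} ⟨d, hd⟩, by simp⟩

theorem mem_famToZF {D : Finset (Finset Ordinal.{0})} {x : ZFSet.{0}} :
    x ∈ famToZF D ↔ ∃ d ∈ D, finsetToZF d = x := by
  rw [famToZF]
  simp only [ZFSet.mem_range, Set.mem_range]
  constructor
  · rintro ⟨i, rfl⟩
    exact ⟨_, ((equivShrink.{0} {x // x ∈ D}).symm i).2, rfl⟩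
  · rintro ⟨d, hd, rfl⟩
    exact ⟨equivShrink.{0} {x // x ∈ D} ⟨d, hd⟩, by simp⟩

theorem mem_seqToZF {D : ℕ → Finset (Finset Ordinal.{0})} {x : ZFSet.{0}} :
    x ∈ seqToZF D ↔ ∃ i : ℕ, x = ZFSet.pair (toZF i) (famToZF (D i)) := by
  rw [seqToZF]
  simp only [ZFSet.mem_range, Set.mem_range]
  constructor
  · rintro ⟨i, rfl⟩
    exact ⟨i, rfl⟩
  · rintro ⟨i, rfl⟩
    exact ⟨i, rfl⟩

/-- The canonical internal ω. -/
def omegaZ : ZFSet.{0} := ZFSet.range fun k : ℕ => toZF (k : Ordinal)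

theorem mem_omegaZ {x : ZFSet.{0}} : x ∈ omegaZ ↔ ∃ k : ℕ, toZF (k : Ordinal) = x := by
  rw [omegaZ]
  simp only [ZFSet.mem_range, Set.mem_range]

theorem toZF_nat_zero : toZF ((0 : ℕ) : Ordinal) = ∅ := by
  simp only [Nat.cast_zero, toZF_zero]

theorem toZF_nat_succ (k : ℕ) :
    toZF ((k + 1 : ℕ) : Ordinal) = insert (toZF (k : Ordinal)) (toZF (k : Ordinal)) := by
  rw [Nat.cast_add_one, toZF_succ]



namespace SetForm
open FirstOrder.Language

abbrev BF (α : Type) (l : ℕ) := SetLang.BoundedFormula α l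

def tv {α : Type} {l : ℕ} (x : α ⊕ Fin l) : SetLang.Term (α ⊕ Fin l) :=
  FirstOrder.Language.Term.var x

def memF {α : Type} {l : ℕ} (a b : α ⊕ Fin l) : BF α l :=
  Relations.boundedFormula₂ (true : SetLang.Relations 2) (tv a) (tv b)

def eqF {α : Type} {l : ℕ} (a b : α ⊕ Fin l) : BF α l :=
  Term.bdEqual (tv a) (tv b)

def li {α : Type} {l : ℕ} (x : α ⊕ Fin l) : α ⊕ Fin (l + 1) :=
  Sum.map id Fin.castSucc x

def bv {α : Type} {l : ℕ} : α ⊕ Fin (l + 1) := Sum.inr (Fin.last l)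

@[simp] theorem elim_li {α : Type} {l : ℕ} (v : α → ZFSet.{0}) (xs : Fin l → ZFSet.{0})
    (a : ZFSet.{0}) (x : α ⊕ Fin l) :
    Sum.elim v (Fin.snoc xs a) (li x) = Sum.elim v xs x := by
  cases x <;> simp [li]

@[simp] theorem elim_bv {α : Type} {l : ℕ} (v : α → ZFSet.{0}) (xs : Fin l → ZFSet.{0})
    (a : ZFSet.{0}) :
    Sum.elim v (Fin.snoc xs a) (bv : α ⊕ Fin (l + 1)) = a := by
  simp [bv]

variable (prec : ZFSet.{0} → ZFSet.{0} → Prop)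

/-- Realization in the full universe of sets. -/
def Rz {α : Type} {l : ℕ} (φ : BF α l) (v : α → ZFSet.{0}) (xs : Fin l → ZFSet.{0}) : Prop :=
  @BoundedFormula.Realize SetLang ZFSet.{0} (setStruct prec) α l φ v xs

theorem rz_memF {α : Type} {l : ℕ} (a b : α ⊕ Fin l) (v xs) :
    Rz prec (memF a b) v xs ↔ Sum.elim v xs a ∈ Sum.elim v xs b := by
  letI := setStruct prec
  simp only [Rz, memF, BoundedFormula.realize_rel₂, tv, Term.realize_var]
  rfl

theorem rz_eqF {α : Type} {l : ℕ} (a b : α ⊕ Fin l) (v xs) :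
    Rz prec (eqF a b) v xs ↔ Sum.elim v xs a = Sum.elim v xs b := by
  letI := setStruct prec
  simp only [Rz, eqF, BoundedFormula.realize_bdEqual, tv, Term.realize_var]

theorem rz_all {α : Type} {l : ℕ} (φ : BF α (l + 1)) (v xs) :
    Rz prec φ.all v xs ↔ ∀ a, Rz prec φ v (Fin.snoc xs a) := by
  letI := setStruct prec
  simp only [Rz, BoundedFormula.realize_all]

theorem rz_ex {α : Type} {l : ℕ} (φ : BF α (l + 1)) (v xs) :
    Rz prec φ.ex v xs ↔ ∃ a, Rz prec φ v (Fin.snoc xs a) := by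
  letI := setStruct prec
  simp only [Rz, BoundedFormula.realize_ex]

theorem rz_imp {α : Type} {l : ℕ} (φ ψ : BF α l) (v xs) :
    Rz prec (φ.imp ψ) v xs ↔ (Rz prec φ v xs → Rz prec ψ v xs) := by
  letI := setStruct prec
  simp only [Rz, BoundedFormula.realize_imp]

theorem rz_inf {α : Type} {l : ℕ} (φ ψ : BF α l) (v xs) :
    Rz prec (φ ⊓ ψ) v xs ↔ (Rz prec φ v xs ∧ Rz prec ψ v xs) := by
  letI := setStruct prec
  simp only [Rz, BoundedFormula.realize_inf]

theorem rz_sup {α : Type} {l : ℕ} (φ ψ : BF α l) (v xs) :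
    Rz prec (φ ⊔ ψ) v xs ↔ (Rz prec φ v xs ∨ Rz prec ψ v xs) := by
  letI := setStruct prec
  simp only [Rz, BoundedFormula.realize_sup]

theorem rz_iff {α : Type} {l : ℕ} (φ ψ : BF α l) (v xs) :
    Rz prec (φ.iff ψ) v xs ↔ (Rz prec φ v xs ↔ Rz prec ψ v xs) := by
  letI := setStruct prec
  simp only [Rz, BoundedFormula.realize_iff]

end SetForm



namespace SetForm
open FirstOrder.Language

theorem rz_not {α : Type} {l : ℕ} (φ : BF α l) (v xs) :
    Rz prec φ.not v xs ↔ ¬ Rz prec φ v xs := by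
  letI := setStruct prec
  simp only [Rz, BoundedFormula.realize_not]

theorem rz_top {α : Type} {l : ℕ} (v xs) :
    Rz prec (⊤ : BF α l) v xs ↔ True := by
  letI := setStruct prec
  simp only [Rz, BoundedFormula.realize_top]

/-- "z = {a}" -/
def sngl {α : Type} {l : ℕ} (z a : α ⊕ Fin l) : BF α l :=
  BoundedFormula.all ((memF bv (li z)).iff (eqF bv (li a)))

/-- "z = {a, b}" -/
def upr {α : Type} {l : ℕ} (z a b : α ⊕ Fin l) : BF α l :=
  BoundedFormula.all ((memF bv (li z)).iff ((eqF bv (li a)) ⊔ (eqF bv (li b))))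

/-- "p = ⟨a, b⟩" (Kuratowski) -/
def pairEqF {α : Type} {l : ℕ} (p a b : α ⊕ Fin l) : BF α l :=
  BoundedFormula.all ((memF bv (li p)).iff ((sngl bv (li a)) ⊔ (upr bv (li a) (li b))))

theorem zf_eq_singleton_iff {w a : ZFSet.{0}} : (∀ u, u ∈ w ↔ u = a) ↔ w = ({a} : ZFSet) := by
  rw [ZFSet.ext_iff]
  simp only [ZFSet.mem_singleton]

theorem zf_eq_upair_iff {w a b : ZFSet.{0}} :
    (∀ u, u ∈ w ↔ (u = a ∨ u = b)) ↔ w = ({a, b} : ZFSet) := by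
  rw [ZFSet.ext_iff]
  simp only [ZFSet.mem_insert_iff, ZFSet.mem_singleton]

theorem zf_mem_pair' {w a b : ZFSet.{0}} :
    w ∈ ZFSet.pair a b ↔ w = ({a} : ZFSet) ∨ w = ({a, b} : ZFSet) := by
  simp only [ZFSet.pair, ZFSet.mem_insert_iff, ZFSet.mem_singleton]

theorem rz_sngl {α : Type} {l : ℕ} (z a : α ⊕ Fin l) (v xs) :
    Rz prec (sngl z a) v xs ↔ Sum.elim v xs z = ({Sum.elim v xs a} : ZFSet) := by
  rw [← zf_eq_singleton_iff]
  rw [sngl, rz_all]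
  refine forall_congr' fun w => ?_
  rw [rz_iff, rz_memF, rz_eqF]
  simp only [elim_li, elim_bv]

theorem rz_upr {α : Type} {l : ℕ} (z a b : α ⊕ Fin l) (v xs) :
    Rz prec (upr z a b) v xs ↔
      Sum.elim v xs z = ({Sum.elim v xs a, Sum.elim v xs b} : ZFSet) := by
  rw [← zf_eq_upair_iff]
  rw [upr, rz_all]
  refine forall_congr' fun w => ?_
  rw [rz_iff, rz_memF, rz_sup, rz_eqF, rz_eqF]
  simp only [elim_li, elim_bv]

theorem rz_pairEqF {α : Type} {l : ℕ} (p a b : α ⊕ Fin l) (v xs) :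
    Rz prec (pairEqF p a b) v xs ↔
      Sum.elim v xs p = ZFSet.pair (Sum.elim v xs a) (Sum.elim v xs b) := by
  rw [pairEqF, rz_all]
  have : ∀ w, (Rz prec ((memF bv (li p)).iff ((sngl bv (li a)) ⊔ (upr bv (li a) (li b)))) v
      (Fin.snoc xs w)) ↔ (w ∈ Sum.elim v xs p ↔ w ∈ ZFSet.pair (Sum.elim v xs a)
        (Sum.elim v xs b)) := by
    intro w
    rw [rz_iff, rz_memF, rz_sup, rz_sngl, rz_upr]
    simp only [elim_li, elim_bv]
    rw [zf_mem_pair']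
  simp only [this]
  rw [← ZFSet.ext_iff]

/-- "⟨a, b⟩ ∈ s" -/
def pmemF {α : Type} {l : ℕ} (a b s : α ⊕ Fin l) : BF α l :=
  BoundedFormula.ex ((pairEqF bv (li a) (li b)) ⊓ (memF bv (li s)))

theorem rz_pmemF {α : Type} {l : ℕ} (a b s : α ⊕ Fin l) (v xs) :
    Rz prec (pmemF a b s) v xs ↔
      ZFSet.pair (Sum.elim v xs a) (Sum.elim v xs b) ∈ Sum.elim v xs s := by
  rw [pmemF, rz_ex]
  constructor
  · rintro ⟨w, hw⟩
    rw [rz_inf, rz_pairEqF, rz_memF] at hw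
    simp only [elim_li, elim_bv] at hw
    rw [← hw.1]; exact hw.2
  · intro h
    refine ⟨ZFSet.pair (Sum.elim v xs a) (Sum.elim v xs b), ?_⟩
    rw [rz_inf, rz_pairEqF, rz_memF]
    simp only [elim_li, elim_bv]
    exact ⟨trivial, h⟩

/-- "⟨⟨x, y⟩, c⟩ ∈ s" -/
def p2memF {α : Type} {l : ℕ} (x y c s : α ⊕ Fin l) : BF α l :=
  BoundedFormula.ex ((pairEqF bv (li x) (li y)) ⊓ (pmemF bv (li c) (li s)))

theorem rz_p2memF {α : Type} {l : ℕ} (x y c s : α ⊕ Fin l) (v xs) :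
    Rz prec (p2memF x y c s) v xs ↔
      ZFSet.pair (ZFSet.pair (Sum.elim v xs x) (Sum.elim v xs y)) (Sum.elim v xs c)
        ∈ Sum.elim v xs s := by
  rw [p2memF, rz_ex]
  constructor
  · rintro ⟨w, hw⟩
    rw [rz_inf, rz_pairEqF, rz_pmemF] at hw
    simp only [elim_li, elim_bv] at hw
    rw [← hw.1]; exact hw.2
  · intro h
    refine ⟨ZFSet.pair (Sum.elim v xs x) (Sum.elim v xs y), ?_⟩
    rw [rz_inf, rz_pairEqF, rz_pmemF]
    simp only [elim_li, elim_bv]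
    exact ⟨trivial, h⟩

end SetForm



namespace SetForm
open FirstOrder.Language

theorem transfer_ex {prec : ZFSet.{0} → ZFSet.{0} → Prop} {K : Type} (N : ESub prec)
    (φ : BF K 1) (v : K → ZFSet.{0}) (hv : ∀ i, v i ∈ carr N)
    (h : Rz prec φ.ex v default) :
    ∃ w ∈ carr N, Rz prec φ v (fun _ => w) := by
  letI := setStruct prec
  set v' : K → N := fun i => ⟨v i, hv i⟩ with hv'
  have hco : ((↑) : N → ZFSet.{0}) ∘ v' = v := rfl
  have h1 : Formula.Realize (M := ZFSet.{0}) φ.ex (((↑) : N → ZFSet.{0}) ∘ v') := by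
    rw [hco]; exact h
  have h2 : Formula.Realize (M := N) φ.ex v' := (N.subtype.map_formula φ.ex v').1 h1
  rw [Formula.Realize, BoundedFormula.realize_ex] at h2
  obtain ⟨a, ha⟩ := h2
  refine ⟨(a : ZFSet.{0}), a.2, ?_⟩
  have h3 := (N.subtype.map_boundedFormula φ v' (Fin.snoc default a)).2 ha
  -- note: goal massaging below
  have hxs : (⇑N.subtype) ∘ (Fin.snoc (default : Fin 0 → ↥N) a) = fun _ => (a : ZFSet.{0}) := by
    funext i
    have : i = Fin.last 0 := by omega
    rw [this]
    simp only [Function.comp_apply, Fin.snoc_last]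
    rfl
  rw [hxs] at h3
  exact h3

end SetForm



namespace SetForm
open FirstOrder.Language

/-- "y = ∅" (as: nothing is a member). -/
def emptyF {α : Type} {l : ℕ} (y : α ⊕ Fin l) : BF α l :=
  BoundedFormula.all (memF bv (li y)).not

theorem rz_emptyF {α : Type} {l : ℕ} (y : α ⊕ Fin l) (v xs) :
    Rz prec (emptyF y) v xs ↔ ∀ z, z ∉ Sum.elim v xs y := by
  rw [emptyF, rz_all]
  refine forall_congr' fun w => ?_
  rw [rz_not, rz_memF]
  simp only [elim_li, elim_bv]

/-- "y = a ∪ {a}" -/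
def succEqF {α : Type} {l : ℕ} (y a : α ⊕ Fin l) : BF α l :=
  BoundedFormula.all ((memF bv (li y)).iff ((memF bv (li a)) ⊔ (eqF bv (li a))))

theorem rz_succEqF {α : Type} {l : ℕ} (y a : α ⊕ Fin l) (v xs) :
    Rz prec (succEqF y a) v xs ↔
      Sum.elim v xs y = insert (Sum.elim v xs a) (Sum.elim v xs a) := by
  rw [succEqF, rz_all, ZFSet.ext_iff]
  refine forall_congr' fun w => ?_
  rw [rz_iff, rz_memF, rz_sup, rz_memF, rz_eqF]
  simp only [elim_li, elim_bv]
  rw [ZFSet.mem_insert_iff]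
  tauto

/-- "w ⊆ w'" -/
def subF {α : Type} {l : ℕ} (w w' : α ⊕ Fin l) : BF α l :=
  BoundedFormula.all ((memF bv (li w)).imp (memF bv (li w')))

theorem rz_subF {α : Type} {l : ℕ} (w w' : α ⊕ Fin l) (v xs) :
    Rz prec (subF w w') v xs ↔ ∀ z, z ∈ Sum.elim v xs w → z ∈ Sum.elim v xs w' := by
  rw [subF, rz_all]
  refine forall_congr' fun z => ?_
  rw [rz_imp, rz_memF, rz_memF]
  simp only [elim_li, elim_bv]

/-- Inductiveness predicate (semantic side). -/
def IndZ (w : ZFSet.{0}) : Prop :=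
  (∃ z, z ∈ w ∧ ∀ u, u ∉ z) ∧ (∀ y, y ∈ w → ∃ y', y' ∈ w ∧ y' = insert y y)

/-- "w is inductive" -/
def indF {α : Type} {l : ℕ} (w : α ⊕ Fin l) : BF α l :=
  (BoundedFormula.ex ((memF bv (li w)) ⊓ (emptyF bv))) ⊓
    (BoundedFormula.all ((memF bv (li w)).imp
      (BoundedFormula.ex ((memF bv (li (li w))) ⊓ (succEqF bv (li bv))))))

theorem rz_indF {α : Type} {l : ℕ} (w : α ⊕ Fin l) (v xs) :
    Rz prec (indF w) v xs ↔ IndZ (Sum.elim v xs w) := by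
  rw [indF, rz_inf, rz_ex, rz_all, IndZ]
  constructor
  · rintro ⟨⟨z, hz⟩, h2⟩
    rw [rz_inf, rz_memF, rz_emptyF] at hz
    simp only [elim_li, elim_bv] at hz
    refine ⟨⟨z, hz.1, hz.2⟩, fun y hy => ?_⟩
    have := h2 y
    rw [rz_imp, rz_memF] at this
    simp only [elim_li, elim_bv] at this
    obtain ⟨y', hy'⟩ := (rz_ex prec _ _ _).1 (this hy)
    rw [rz_inf, rz_memF, rz_succEqF] at hy'
    simp only [elim_li, elim_bv] at hy'
    exact ⟨y', hy'.1, hy'.2⟩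
  · rintro ⟨⟨z, hz1, hz2⟩, h2⟩
    constructor
    · refine ⟨z, ?_⟩
      rw [rz_inf, rz_memF, rz_emptyF]
      simp only [elim_li, elim_bv]
      exact ⟨hz1, hz2⟩
    · intro y
      rw [rz_imp, rz_memF]
      simp only [elim_li, elim_bv]
      intro hy
      obtain ⟨y', hy'1, hy'2⟩ := h2 y hy
      rw [rz_ex]
      refine ⟨y', ?_⟩
      rw [rz_inf, rz_memF, rz_succEqF]
      simp only [elim_li, elim_bv]
      exact ⟨hy'1, hy'2⟩

/-- "w is the least inductive set". -/
def omegaDefF {α : Type} {l : ℕ} (w : α ⊕ Fin l) : BF α l :=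
  (indF w) ⊓ (BoundedFormula.all ((indF bv).imp (subF (li w) bv)))

theorem rz_omegaDefF {α : Type} {l : ℕ} (w : α ⊕ Fin l) (v xs) :
    Rz prec (omegaDefF w) v xs ↔
      IndZ (Sum.elim v xs w) ∧
        ∀ w', IndZ w' → ∀ z, z ∈ Sum.elim v xs w → z ∈ w' := by
  rw [omegaDefF, rz_inf, rz_indF, rz_all]
  refine and_congr Iff.rfl (forall_congr' fun w' => ?_)
  rw [rz_imp, rz_indF, rz_subF]
  simp only [elim_li, elim_bv]

theorem indZ_omegaZ : IndZ omegaZ := by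
  constructor
  · refine ⟨∅, ?_, fun u => ZFSet.notMem_empty u⟩
    rw [mem_omegaZ]
    exact ⟨0, toZF_nat_zero⟩
  · intro y hy
    rw [mem_omegaZ] at hy
    obtain ⟨k, rfl⟩ := hy
    refine ⟨insert (toZF (k : Ordinal)) (toZF (k : Ordinal)), ?_, rfl⟩
    rw [mem_omegaZ]
    exact ⟨k + 1, toZF_nat_succ k⟩

theorem indZ_min {w : ZFSet.{0}} (hw : IndZ w) (k : ℕ) : toZF (k : Ordinal) ∈ w := by
  induction k with
  | zero =>
    obtain ⟨⟨z, hz1, hz2⟩, _⟩ := hw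
    have : z = ∅ := ZFSet.ext fun u => ⟨fun h => absurd h (hz2 u), fun h =>
      absurd h (ZFSet.notMem_empty u)⟩
    rw [toZF_nat_zero, ← this]
    exact hz1
  | succ k ih =>
    obtain ⟨_, h2⟩ := hw
    obtain ⟨y', hy'1, hy'2⟩ := h2 _ ih
    rw [toZF_nat_succ, ← hy'2]
    exact hy'1

theorem omegaZ_unique {w : ZFSet.{0}} (h1 : IndZ w)
    (h2 : ∀ w', IndZ w' → ∀ z, z ∈ w → z ∈ w') : w = omegaZ := by
  apply ZFSet.ext
  intro z
  constructor
  · exact fun hz => h2 omegaZ indZ_omegaZ z hz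
  · intro hz
    rw [mem_omegaZ] at hz
    obtain ⟨k, rfl⟩ := hz
    exact indZ_min h1 k

end SetForm



namespace SetForm
open FirstOrder.Language

@[simp] theorem elim_bv' {α : Type} {l : ℕ} (v : α → ZFSet.{0}) (xs : Fin (l + 1) → ZFSet.{0}) :
    Sum.elim v xs (bv : α ⊕ Fin (l + 1)) = xs (Fin.last l) := by
  simp [bv]

theorem nat_mem_carr {prec : ZFSet.{0} → ZFSet.{0} → Prop} (N : ESub prec) (k : ℕ) :
    toZF (k : Ordinal) ∈ carr N := by
  induction k with
  | zero =>
    have h : Rz prec (emptyF (bv : Fin 0 ⊕ Fin 1)).ex default default := by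
      rw [rz_ex]
      refine ⟨∅, ?_⟩
      rw [rz_emptyF]
      simp only [elim_bv]
      exact fun z => ZFSet.notMem_empty z
    obtain ⟨w, hwN, hw⟩ := transfer_ex N _ default (fun i => i.elim0) h
    rw [rz_emptyF] at hw
    simp only [elim_bv', Sum.elim_inr] at hw
    have : w = toZF ((0 : ℕ) : Ordinal) := by
      rw [toZF_nat_zero]
      exact ZFSet.ext fun u => ⟨fun h' => absurd h' (hw u), fun h' =>
        absurd h' (ZFSet.notMem_empty u)⟩
    rwa [← this]
  | succ k ih =>
    have h : Rz prec ((succEqF (bv : Fin 1 ⊕ Fin 1) (Sum.inl 0)).ex)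
        (fun _ => toZF (k : Ordinal)) default := by
      rw [rz_ex]
      refine ⟨insert (toZF (k : Ordinal)) (toZF (k : Ordinal)), ?_⟩
      rw [rz_succEqF]
      simp only [elim_bv, Sum.elim_inl]
    obtain ⟨w, hwN, hw⟩ := transfer_ex N _ _ (fun _ => ih) h
    rw [rz_succEqF] at hw
    simp only [elim_bv', Sum.elim_inl] at hw
    rw [toZF_nat_succ, ← hw]
    exact hwN

theorem omega_mem_carr {prec : ZFSet.{0} → ZFSet.{0} → Prop} (N : ESub prec) :
    omegaZ ∈ carr N := by
  have h : Rz prec ((omegaDefF (bv : Fin 0 ⊕ Fin 1)).ex) default default := by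
    rw [rz_ex]
    refine ⟨omegaZ, ?_⟩
    rw [rz_omegaDefF]
    simp only [elim_bv]
    refine ⟨indZ_omegaZ, fun w' hw' z hz => ?_⟩
    rw [mem_omegaZ] at hz
    obtain ⟨k, rfl⟩ := hz
    exact indZ_min hw' k
  obtain ⟨w, hwN, hw⟩ := transfer_ex N _ default (fun i => i.elim0) h
  rw [rz_omegaDefF] at hw
  simp only [elim_bv', Sum.elim_inr] at hw
  rwa [← omegaZ_unique hw.1 hw.2]

/-- "s enumerates x with indices in W" -/
def enumF : BF (Fin 2) 1 :=
  BoundedFormula.all ((memF bv (Sum.inl 0)).imp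
    (BoundedFormula.ex (((memF bv (Sum.inl 1)) ⊓ (pmemF bv (li bv) (li (li bv)))) ⊓
      (BoundedFormula.all ((pmemF (li bv) bv (li (li (li bv)))).imp
        (eqF bv (li (li bv))))))))

theorem rz_enumF {prec : ZFSet.{0} → ZFSet.{0} → Prop} (v : Fin 2 → ZFSet.{0})
    (xs : Fin 1 → ZFSet.{0}) :
    Rz prec enumF v xs ↔ ∀ y, y ∈ v 0 →
      ∃ k, (k ∈ v 1 ∧ ZFSet.pair k y ∈ xs (Fin.last 0)) ∧
        ∀ y', ZFSet.pair k y' ∈ xs (Fin.last 0) → y' = y := by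
  simp only [enumF, rz_all, rz_imp, rz_ex, rz_inf, rz_memF, rz_pmemF, rz_eqF,
    elim_li, elim_bv, elim_bv', Sum.elim_inl, Sum.elim_inr, Fin.snoc_last]

theorem mem_carr_of_ctbl {prec : ZFSet.{0} → ZFSet.{0} → Prop} (N : ESub prec) {x : ZFSet.{0}}
    (hx : x ∈ carr N) (hc : x.toSet.Countable) {y : ZFSet.{0}} (hy : y ∈ x) : y ∈ carr N := by
  have hne : x.toSet.Nonempty := ⟨y, (zf_mem_toSet y x).2 hy⟩
  obtain ⟨e, he⟩ := hc.exists_eq_range hne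
  have hv : ∀ i : Fin 2, (![x, omegaZ] : Fin 2 → ZFSet.{0}) i ∈ carr N := by
    intro i
    fin_cases i
    · exact hx
    · exact omega_mem_carr N
  have htrue : Rz prec enumF.ex ![x, omegaZ] default := by
    rw [rz_ex]
    refine ⟨ZFSet.range (fun k : ℕ => ZFSet.pair (toZF (k : Ordinal)) (e k)), ?_⟩
    rw [rz_enumF]
    simp only [Fin.snoc_last, Matrix.cons_val_zero, Matrix.cons_val_one, Matrix.head_cons]
    intro y0 hy0
    have hy0' : y0 ∈ x.toSet := (zf_mem_toSet _ _).2 hy0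
    rw [he] at hy0'
    obtain ⟨k0, rfl⟩ := hy0'
    refine ⟨toZF (k0 : Ordinal), ⟨?_, ?_⟩, ?_⟩
    · rw [mem_omegaZ]; exact ⟨k0, rfl⟩
    · rw [ZFSet.mem_range]; exact ⟨k0, rfl⟩
    · intro y' hy'
      rw [ZFSet.mem_range] at hy'
      obtain ⟨k1, hk1⟩ := hy'
      obtain ⟨h1, h2⟩ := ZFSet.pair_injective hk1
      have : k1 = k0 := by
        have := toZF_injective h1
        exact_mod_cast this
      rw [this] at h2
      exact h2.symm
  obtain ⟨s, hsN, hs⟩ := transfer_ex N enumF ![x, omegaZ] hv htrue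
  rw [rz_enumF] at hs
  simp only [Matrix.cons_val_zero, Matrix.cons_val_one, Matrix.head_cons] at hs
  obtain ⟨kz, ⟨hk1, hk2⟩, hk3⟩ := hs y hy
  rw [mem_omegaZ] at hk1
  obtain ⟨k0, rfl⟩ := hk1
  have htrue2 : Rz prec ((pmemF (Sum.inl 0) (bv : Fin 2 ⊕ Fin 1) (Sum.inl 1)).ex)
      ![toZF (k0 : Ordinal), s] default := by
    rw [rz_ex]
    refine ⟨y, ?_⟩
    rw [rz_pmemF]
    simp only [elim_bv, Sum.elim_inl, Matrix.cons_val_zero, Matrix.cons_val_one,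
      Matrix.head_cons]
    exact hk2
  have hv2 : ∀ i : Fin 2, (![toZF (k0 : Ordinal), s] : Fin 2 → ZFSet.{0}) i ∈ carr N := by
    intro i
    fin_cases i
    · exact nat_mem_carr N k0
    · exact hsN
  obtain ⟨w, hwN, hw⟩ := transfer_ex N _ _ hv2 htrue2
  rw [rz_pmemF] at hw
  simp only [elim_bv', Sum.elim_inl, Sum.elim_inr, Matrix.cons_val_zero, Matrix.cons_val_one,
    Matrix.head_cons] at hw
  rwa [← hk3 w hw]

end SetForm



namespace SetForm
open FirstOrder.Language

/-- Parameter indices: `inl 0` = code of `f`, `inl 1` = code of `j`, `inl 2` = code of `D n`,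
`inr (inl m)` = code of `α m`, `inr (inr m)` = code of `D m`. -/
def P (n : ℕ) : Type := Fin 3 ⊕ (Fin n ⊕ Fin n)

variable {n : ℕ}

def pfV : P n := Sum.inl 0
def jV : P n := Sum.inl 1
def pnV : P n := Sum.inl 2
def aV (m : Fin n) : P n := Sum.inr (Sum.inl m)
def pV (m : Fin n) : P n := Sum.inr (Sum.inr m)

/-- "x is (the code of) an ordinal < ω₁", via membership in the domain of the code of `f`. -/
def belowF {l : ℕ} (x : P n ⊕ Fin l) : BF (P n) l :=
  BoundedFormula.ex (p2memF (li x) (li x) bv (Sum.inl pfV))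

theorem rz_belowF {l : ℕ} (x : P n ⊕ Fin l) (v xs) :
    Rz prec (belowF x) v xs ↔
      ∃ c, ZFSet.pair (ZFSet.pair (Sum.elim v xs x) (Sum.elim v xs x)) c ∈ v pfV := by
  simp only [belowF, rz_ex, rz_p2memF, elim_li, elim_bv, Sum.elim_inl]

/-- Semantic content of the internal homogeneity formula. -/
def HomoZ (pf y a : ZFSet.{0}) : Prop :=
  ∀ d, d ∈ y → ∀ δ, δ ∈ d → ∀ δ', δ' ∈ d → δ ∈ a → δ' ∈ a →
    ∀ c, ZFSet.pair (ZFSet.pair δ a) c ∈ pf →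
      ∀ c', ZFSet.pair (ZFSet.pair δ' a) c' ∈ pf → c = c'

/-- "α (coded by `a`) is homogeneous for the family coded by `y`, w.r.t. `f`". -/
def homoF {l : ℕ} (y a : P n ⊕ Fin l) : BF (P n) l :=
  BoundedFormula.all ((memF bv (li y)).imp
    (BoundedFormula.all ((memF bv (li bv)).imp
      (BoundedFormula.all ((memF bv (li (li bv))).imp
        ((memF (li bv) (li (li (li a)))).imp
          ((memF bv (li (li (li a)))).imp
            (BoundedFormula.all ((p2memF (li (li bv)) (li (li (li (li a)))) bv
                (Sum.inl pfV)).imp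
              (BoundedFormula.all ((p2memF (li (li bv)) (li (li (li (li (li a))))) bv
                  (Sum.inl pfV)).imp
                (eqF (li bv) bv))))))))))))

theorem rz_homoF {l : ℕ} (y a : P n ⊕ Fin l) (v xs) :
    Rz prec (homoF y a) v xs ↔
      HomoZ (v pfV) (Sum.elim v xs y) (Sum.elim v xs a) := by
  simp only [homoF, HomoZ, rz_all, rz_imp, rz_p2memF, rz_memF, rz_eqF,
    elim_li, elim_bv, Sum.elim_inl]

/-- "i is good for the m-th family/ordinal pair". -/
def goodF {l : ℕ} (m : Fin n) (i : P n ⊕ Fin l) : BF (P n) l :=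
  BoundedFormula.ex ((pmemF (li i) bv (Sum.inl (pV m))) ⊓ (homoF bv (Sum.inl (aV m))))

theorem rz_goodF {l : ℕ} (m : Fin n) (i : P n ⊕ Fin l) (v xs) :
    Rz prec (goodF m i) v xs ↔
      ∃ y, ZFSet.pair (Sum.elim v xs i) y ∈ v (pV m) ∧ HomoZ (v pfV) y (v (aV m)) := by
  simp only [goodF, rz_ex, rz_inf, rz_pmemF, rz_homoF, elim_li, elim_bv, Sum.elim_inl]

/-- "i is good for all m < n". -/
def goodAllF {l : ℕ} (i : P n ⊕ Fin l) : BF (P n) l :=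
  (List.finRange n).foldr (fun m acc => (goodF m i) ⊓ acc) ⊤

theorem rz_goodAllF {l : ℕ} (i : P n ⊕ Fin l) (v xs) :
    Rz prec (goodAllF i) v xs ↔
      ∀ m : Fin n, ∃ y, ZFSet.pair (Sum.elim v xs i) y ∈ v (pV m) ∧
        HomoZ (v pfV) y (v (aV m)) := by
  rw [goodAllF]
  have : ∀ L : List (Fin n),
      Rz prec (L.foldr (fun m acc => (goodF m i) ⊓ acc) ⊤) v xs ↔
        ∀ m ∈ L, ∃ y, ZFSet.pair (Sum.elim v xs i) y ∈ v (pV m) ∧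
          HomoZ (v pfV) y (v (aV m)) := by
    intro L
    induction L with
    | nil => simp only [List.foldr_nil, rz_top, List.not_mem_nil, true_iff]; tauto
    | cons hd tl ih =>
      simp only [List.foldr_cons, rz_inf, ih, rz_goodF, List.mem_cons]
      constructor
      · rintro ⟨h1, h2⟩ m (rfl | hm)
        · exact h1
        · exact h2 m hm
      · intro h
        exact ⟨h hd (Or.inl rfl), fun m hm => h m (Or.inr hm)⟩
  rw [this]
  simp only [List.mem_finRange, forall_true_left]

/-- The matrix of the reflected statement. -/
def bodyF : BF (P n) 2 :=
  BoundedFormula.ex (BoundedFormula.ex (BoundedFormula.ex (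
    ((((memF (li (li bv)) (Sum.inl pnV)) ⊓ (pairEqF (li (li bv)) (li bv) bv))
      ⊓ (memF (Sum.inl jV) (li bv)))
      ⊓ ((homoF bv (li (li (li bv)))) ⊓ (goodAllF (li bv)))))))

/-- Semantic content of `bodyF`. -/
def BodyZ (v : P n → ZFSet.{0}) (x : ZFSet.{0}) : Prop :=
  ∃ z i y, ((z ∈ v pnV ∧ z = ZFSet.pair i y) ∧ v jV ∈ i) ∧
    (HomoZ (v pfV) y x ∧
      ∀ m : Fin n, ∃ y', ZFSet.pair i y' ∈ v (pV m) ∧ HomoZ (v pfV) y' (v (aV m)))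

theorem rz_bodyF (v : P n → ZFSet.{0}) (xs : Fin 2 → ZFSet.{0}) :
    Rz prec bodyF v xs ↔ BodyZ v (xs (Fin.last 1)) := by
  rw [BodyZ]
  simp only [bodyF, rz_ex, rz_inf, rz_memF, rz_pairEqF, rz_homoF, rz_goodAllF,
    elim_li, elim_bv, elim_bv', Sum.elim_inl, Fin.snoc_last]

/-- The full inner statement, with `γ` as the bound variable. -/
def innerF : BF (P n) 1 :=
  (belowF bv) ⊓ (BoundedFormula.all ((belowF bv).imp
    (((memF (li bv) bv) ⊔ (eqF (li bv) bv)).imp bodyF)))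

/-- Semantic content of `innerF`. -/
def InnerZ (v : P n → ZFSet.{0}) (g : ZFSet.{0}) : Prop :=
  (∃ c, ZFSet.pair (ZFSet.pair g g) c ∈ v pfV) ∧
    ∀ x, (∃ c, ZFSet.pair (ZFSet.pair x x) c ∈ v pfV) → (g ∈ x ∨ g = x) → BodyZ v x

theorem rz_innerF (v : P n → ZFSet.{0}) (xs : Fin 1 → ZFSet.{0}) :
    Rz prec innerF v xs ↔ InnerZ v (xs (Fin.last 0)) := by
  rw [InnerZ, innerF, rz_inf, rz_belowF, rz_all]
  refine and_congr (by simp only [elim_bv']) (forall_congr' fun x => ?_)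
  rw [rz_imp, rz_imp, rz_belowF, rz_sup, rz_memF, rz_eqF, rz_bodyF]
  simp only [elim_li, elim_bv, elim_bv', Fin.snoc_last]

end SetForm



open SetForm in
theorem below_decode {f : Ordinal.{0} → Ordinal.{0} → Ordinal.{0}} {x : ZFSet.{0}} :
    (∃ c, ZFSet.pair (ZFSet.pair x x) c ∈ fun2ToZF f) ↔ ∃ a, a < w1 ∧ x = toZF a := by
  constructor
  · rintro ⟨c, hc⟩
    rw [mem_fun2ToZF] at hc
    obtain ⟨a, b, ha, hb, heq⟩ := hc
    obtain ⟨h1, _⟩ := ZFSet.pair_injective heq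
    obtain ⟨h3, _⟩ := ZFSet.pair_injective h1
    exact ⟨a, ha, h3⟩
  · rintro ⟨a, ha, rfl⟩
    exact ⟨toZF (f a a), mem_fun2ToZF.2 ⟨a, a, ha, ha, rfl⟩⟩

open SetForm in
theorem homoZ_decode {f : Ordinal.{0} → Ordinal.{0} → Ordinal.{0}}
    {E : Finset (Finset Ordinal.{0})} (hE : ∀ d ∈ E, ∀ δ ∈ d, δ < w1)
    {a0 : Ordinal.{0}} (ha0 : a0 < w1) :
    HomoZ (fun2ToZF f) (famToZF E) (toZF a0) ↔ a0 ∈ HomoSet E f := by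
  constructor
  · intro h
    intro d hd δ hδ δ' hδ' hlt hlt'
    have := h (finsetToZF d) (mem_famToZF.2 ⟨d, hd, rfl⟩)
      (toZF δ) (mem_finsetToZF.2 ⟨δ, hδ, rfl⟩)
      (toZF δ') (mem_finsetToZF.2 ⟨δ', hδ', rfl⟩)
      (toZF_mem_toZF hlt) (toZF_mem_toZF hlt')
      (toZF (f δ a0)) (mem_fun2ToZF.2 ⟨δ, a0, hE d hd δ hδ, ha0, rfl⟩)
      (toZF (f δ' a0)) (mem_fun2ToZF.2 ⟨δ', a0, hE d hd δ' hδ', ha0, rfl⟩)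
    exact toZF_injective this
  · intro h d hd δ hδ δ'' hδ'' hmem hmem' c hc c' hc'
    rw [mem_famToZF] at hd
    obtain ⟨d0, hd0, rfl⟩ := hd
    rw [mem_finsetToZF] at hδ hδ''
    obtain ⟨δ0, hδ0, rfl⟩ := hδ
    obtain ⟨δ0', hδ0', rfl⟩ := hδ''
    have hlt : δ0 < a0 := toZF_mem_iff.1 hmem
    have hlt' : δ0' < a0 := toZF_mem_iff.1 hmem'
    rw [mem_fun2ToZF] at hc hc'
    obtain ⟨a, b, ha, hb, heq⟩ := hc
    obtain ⟨h1, h2⟩ := ZFSet.pair_injective heq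
    obtain ⟨h3, h4⟩ := ZFSet.pair_injective h1
    obtain ⟨a', b', ha', hb', heq'⟩ := hc'
    obtain ⟨h1', h2'⟩ := ZFSet.pair_injective heq'
    obtain ⟨h3', h4'⟩ := ZFSet.pair_injective h1'
    rw [h2, h2', ← toZF_injective h3, ← toZF_injective h4, ← toZF_injective h3',
      ← toZF_injective h4']
    rw [h d0 hd0 δ0 hδ0 δ0' hδ0' hlt hlt']

open SetForm in
theorem good_decode {f : Ordinal.{0} → Ordinal.{0} → Ordinal.{0}}
    {Dm : ℕ → Finset (Finset Ordinal.{0})}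
    (hb : ∀ i, ∀ d ∈ Dm i, ∀ δ ∈ d, δ < w1) {am : Ordinal.{0}} (ham : am < w1) (i0 : ℕ) :
    (∃ y, ZFSet.pair (toZF (i0 : Ordinal)) y ∈ seqToZF Dm ∧
      HomoZ (fun2ToZF f) y (toZF am)) ↔ am ∈ HomoSet (Dm i0) f := by
  constructor
  · rintro ⟨y, hy, hh⟩
    rw [mem_seqToZF] at hy
    obtain ⟨i1, heq⟩ := hy
    obtain ⟨h1, h2⟩ := ZFSet.pair_injective heq
    have : i0 = i1 := by exact_mod_cast toZF_injective h1
    subst this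
    rw [h2] at hh
    exact (homoZ_decode (hb i0) ham).1 hh
  · intro h
    exact ⟨famToZF (Dm i0), mem_seqToZF.2 ⟨i0, rfl⟩, (homoZ_decode (hb i0) ham).2 h⟩

theorem toSet_ctblToZF {s : Set ZFSet.{0}} {hs : s.Countable} : (ctblToZF s hs).toSet = s := by
  ext z
  rw [zf_mem_toSet, mem_ctblToZF]

theorem carr_subset_of_chain {prec : ZFSet.{0} → ZFSet.{0} → Prop} {N M : ESub prec}
    (hc : (carr N).Countable) (h : ctblToZF (carr N) hc ∈ carr M) : carr N ⊆ carr M := by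
  intro y hy
  exact SetForm.mem_carr_of_ctbl M h (by rw [toSet_ctblToZF]; exact hc) (mem_ctblToZF.2 hy)

theorem toSet_toZF {g : Ordinal.{0}} : (toZF g).toSet = toZF '' (Iio g) := by
  ext z
  rw [zf_mem_toSet, mem_toZF]
  constructor
  · rintro ⟨b, hb, rfl⟩
    exact ⟨b, hb, rfl⟩
  · rintro ⟨b, hb, rfl⟩
    exact ⟨b, hb, rfl⟩

theorem countable_Iio_of_lt_w1_s6 {g : Ordinal.{0}} (hg : g < w1) : (Iio g).Countable := by
  rw [Cardinal.countable_iff_lt_aleph_one _, Ordinal.mk_Iio_ordinal]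
  have h1 : g.card < Cardinal.aleph 1 := Cardinal.lt_ord.1 hg
  have h2 : Cardinal.lift.{1} g.card < Cardinal.lift.{1} (Cardinal.aleph 1) :=
    Cardinal.lift_lt.2 h1
  rwa [Cardinal.lift_aleph, Ordinal.lift_one] at h2

theorem toZF_lt_mem_carr {prec : ZFSet.{0} → ZFSet.{0} → Prop} (N : ESub prec) {g : Ordinal.{0}}
    (hg : g < w1) (hN : toZF g ∈ carr N) {b : Ordinal.{0}} (hb : b < g) : toZF b ∈ carr N := by
  apply SetForm.mem_carr_of_ctbl N hN ?_ (toZF_mem_toZF hb)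
  rw [toSet_toZF]
  exact (countable_Iio_of_lt_w1_s6 hg).image toZF

theorem le_of_notin_carr {prec : ZFSet.{0} → ZFSet.{0} → Prop} (N : ESub prec)
    {g a : Ordinal.{0}} (hg : g < w1) (hgN : toZF g ∈ carr N) (haN : toZF a ∉ carr N) :
    g ≤ a := by
  by_contra hlt
  exact haN (toZF_lt_mem_carr N hg hgN (lt_of_not_ge hlt))

theorem infinite_of_forall_exists_gt {S : Set ℕ} (h : ∀ j, ∃ i, j < i ∧ i ∈ S) : S.Infinite := by
  intro hf
  obtain ⟨b, hb⟩ := hf.bddAbove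
  obtain ⟨i, hi1, hi2⟩ := h b
  exact absurd (hb hi2) (by omega)



namespace SetForm

def mkVal (n : ℕ) (pf pj pn : ZFSet.{0}) (av pv : Fin n → ZFSet.{0}) : P n → ZFSet.{0}
  | .inl i => if i = 0 then pf else if i = 1 then pj else pn
  | .inr (.inl m) => av m
  | .inr (.inr m) => pv m

@[simp] theorem mkVal_pfV {n pf pj pn av pv} : mkVal n pf pj pn av pv pfV = pf := rfl
@[simp] theorem mkVal_jV {n pf pj pn av pv} : mkVal n pf pj pn av pv jV = pj := rfl
@[simp] theorem mkVal_pnV {n pf pj pn av pv} : mkVal n pf pj pn av pv pnV = pn := rfl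
@[simp] theorem mkVal_aV {n pf pj pn av pv} (m : Fin n) :
    mkVal n pf pj pn av pv (aV m) = av m := rfl
@[simp] theorem mkVal_pV {n pf pj pn av pv} (m : Fin n) :
    mkVal n pf pj pn av pv (pV m) = pv m := rfl

end SetForm

theorem main_aux (k : ℕ) (f : Ordinal.{0} → Ordinal.{0} → Ordinal.{0}) (hf : IsAR k f)
    (prec : ZFSet.{0} → ZFSet.{0} → Prop) :
    ∀ (n : ℕ) (N : ℕ → ESub prec) (hcount : ∀ m ≤ n, (carr (N m)).Countable),
      (∀ m (hm : m < n), ctblToZF (carr (N m)) (hcount m hm.le) ∈ carr (N (m + 1))) →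
      fun2ToZF f ∈ carr (N 0) →
      ∀ (D : ℕ → ℕ → Finset (Finset Ordinal.{0})), (∀ m < n, IsSeqK k (D m)) →
      (∀ m < n, seqToZF (D m) ∈ carr (N 0)) →
      ∀ (α : ℕ → Ordinal.{0}), (∀ m < n, α m < w1) →
      (∀ m < n, toZF (α m) ∈ carr (N (m + 1)) ∧ toZF (α m) ∉ carr (N m)) →
      ∀ j : ℕ, ∃ i : ℕ, j < i ∧ ∀ m < n, α m ∈ HomoSet (D m i) f := by
  intro n
  induction n with
  | zero =>
    intro N hcount hchain hfN D hD hDN α hα1 hα2 j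
    exact ⟨j + 1, by omega, fun m hm => absurd hm (by omega)⟩
  | succ n ih =>
    intro N hcount hchain hfN D hD hDN α hα1 hα2 j
    have hsub : ∀ m, m < n + 1 → carr (N m) ⊆ carr (N (m + 1)) := fun m hm =>
      carr_subset_of_chain (hcount m hm.le) (hchain m hm)
    have hmono : ∀ m m', m ≤ m' → m' ≤ n + 1 → carr (N m) ⊆ carr (N m') := by
      intro m m'
      induction m' with
      | zero =>
        intro h1 _
        have : m = 0 := by omega
        subst this
        exact fun _ h => h
      | succ m' ihm =>
        intro h1 h2
        rcases Nat.lt_or_ge m (m' + 1) with h | h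
        · exact ((ihm (by omega) (by omega)).trans (hsub m' (by omega)))
        · have : m = m' + 1 := by omega
          subst this
          exact fun _ h => h
    have hfN' : fun2ToZF f ∈ carr (N n) := hmono 0 n (by omega) (by omega) hfN
    -- the set of good indices below n, from the inductive hypothesis
    set T : Set ℕ := {i | j < i ∧ ∀ m < n, α m ∈ HomoSet (D m i) f} with hTdef
    have hT : T.Infinite := by
      apply _root_.infinite_of_forall_exists_gt
      intro b
      obtain ⟨i, hi1, hi2⟩ := ih N (fun m hm => hcount m (by omega))
        (fun m hm => hchain m (by omega)) hfN D (fun m hm => hD m (by omega))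
        (fun m hm => hDN m (by omega)) α (fun m hm => hα1 m (by omega))
        (fun m hm => hα2 m (by omega)) (max j b)
      refine ⟨i, ?_, ?_, hi2⟩
      · omega
      · omega
    let e : ℕ ↪ T := hT.natEmbedding
    let D' : ℕ → Finset (Finset Ordinal.{0}) := fun i => D n ((e i : ℕ))
    have hDn := hD n (by omega)
    have hseq : IsSeqK k D' := by
      refine ⟨fun i d hd => hDn.1 _ d hd, fun i => hDn.2.1 _, ?_⟩
      intro i i' hii' d hd d' hd' δ hδ
      have hne : ((e i : ℕ)) ≠ ((e i' : ℕ)) := fun hcontra =>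
        hii' (e.injective (Subtype.ext hcontra))
      exact hDn.2.2 _ _ hne d hd d' hd' δ hδ
    obtain ⟨γ, hγw, hγcov⟩ := hf.2 D' hseq
    set v : SetForm.P n → ZFSet.{0} := SetForm.mkVal n (fun2ToZF f) (toZF ((j : ℕ) : Ordinal))
      (seqToZF (D n)) (fun m => toZF (α m)) (fun m => seqToZF (D m)) with hvdef
    have hv : ∀ p, v p ∈ carr (N n) := by
      rintro (i | (m | m))
      · fin_cases i
        · exact hfN'
        · exact SetForm.nat_mem_carr (N n) j
        · exact hmono 0 n (by omega) (by omega) (hDN n (by omega))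
      · exact hmono (m + 1) n (by omega) (by omega) ((hα2 m (by omega)).1)
      · exact hmono 0 n (by omega) (by omega) (hDN m (by omega))
    have hbounds : ∀ i0 : ℕ, ∀ d ∈ D n i0, ∀ δ ∈ d, δ < w1 :=
      fun i0 d hd δ hδ => (hDn.1 i0 d hd).2 δ hδ
    have hboundsm : ∀ m : ℕ, m < n → ∀ i0 : ℕ, ∀ d ∈ D m i0, ∀ δ ∈ d, δ < w1 :=
      fun m hm i0 d hd δ hδ => ((hD m (by omega)).1 i0 d hd).2 δ hδ
    have htrue : SetForm.Rz prec (SetForm.innerF (n := n)).ex v default := by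
      rw [SetForm.rz_ex]
      refine ⟨toZF γ, ?_⟩
      rw [SetForm.rz_innerF]
      simp only [Fin.snoc_last]
      refine ⟨?_, ?_⟩
      · simp only [hvdef, SetForm.mkVal_pfV]
        exact below_decode.2 ⟨γ, hγw, rfl⟩
      · intro x hx hge
        simp only [hvdef, SetForm.mkVal_pfV] at hx
        obtain ⟨a, haw, rfl⟩ := below_decode.1 hx
        have hgea : γ ≤ a := by
          rcases hge with h | h
          · exact le_of_lt (toZF_mem_iff.1 h)
          · exact le_of_eq (toZF_inj.1 h)
        obtain ⟨i, hi⟩ := hγcov a hgea haw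
        obtain ⟨hiTj, hiTm⟩ := (e i).2
        refine ⟨ZFSet.pair (toZF (((e i : ℕ)) : Ordinal)) (famToZF (D n (e i))),
          toZF (((e i : ℕ)) : Ordinal), famToZF (D n (e i)), ⟨⟨?_, rfl⟩, ?_⟩, ?_, ?_⟩
        · simp only [hvdef, SetForm.mkVal_pnV]
          exact mem_seqToZF.2 ⟨(e i : ℕ), rfl⟩
        · simp only [hvdef, SetForm.mkVal_jV]
          exact toZF_mem_toZF (by exact_mod_cast hiTj)
        · simp only [hvdef, SetForm.mkVal_pfV]
          exact (homoZ_decode (hbounds (e i)) haw).2 hi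
        · intro m
          refine ⟨famToZF (D m (e i)), ?_, ?_⟩
          · simp only [hvdef, SetForm.mkVal_pV]
            exact mem_seqToZF.2 ⟨(e i : ℕ), rfl⟩
          · simp only [hvdef, SetForm.mkVal_pfV, SetForm.mkVal_aV]
            exact (homoZ_decode (hboundsm m m.isLt (e i)) (hα1 m (by omega))).2
              (hiTm m m.isLt)
    obtain ⟨g, hgN, hg⟩ := SetForm.transfer_ex (N n) SetForm.innerF v hv htrue
    have hg' : SetForm.InnerZ v g := (SetForm.rz_innerF v (fun _ => g)).1 hg
    obtain ⟨hbel, hbody⟩ := hg'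
    simp only [hvdef, SetForm.mkVal_pfV] at hbel
    obtain ⟨g0, hg0w, hgeq⟩ := below_decode.1 hbel
    rw [hgeq] at hgN
    have hle : g0 ≤ α n := le_of_notin_carr (N n) hg0w hgN (hα2 n (by omega)).2
    have hx : ∃ c, ZFSet.pair (ZFSet.pair (toZF (α n)) (toZF (α n))) c ∈ v SetForm.pfV := by
      simp only [hvdef, SetForm.mkVal_pfV]
      exact below_decode.2 ⟨α n, hα1 n (by omega), rfl⟩
    have hge : g ∈ toZF (α n) ∨ g = toZF (α n) := by
      rw [hgeq]
      rcases lt_or_eq_of_le hle with h | h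
      · exact Or.inl (toZF_mem_toZF h)
      · exact Or.inr (by rw [h])
    obtain ⟨z, icode, y, ⟨⟨hz1, hz2⟩, hji⟩, hhomo, hgood⟩ := hbody (toZF (α n)) hx hge
    simp only [hvdef, SetForm.mkVal_pfV, SetForm.mkVal_pnV, SetForm.mkVal_jV,
      SetForm.mkVal_aV, SetForm.mkVal_pV] at hz1 hji hhomo hgood
    rw [mem_seqToZF] at hz1
    obtain ⟨i1, hz1eq⟩ := hz1
    obtain ⟨hi1, hy1⟩ := ZFSet.pair_injective (hz1eq.symm.trans hz2)
    rw [← hi1] at hji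
    rw [← hy1] at hhomo
    have hji' : j < i1 := by exact_mod_cast toZF_mem_iff.1 hji
    have hn : α n ∈ HomoSet (D n i1) f :=
      (homoZ_decode (hbounds i1) (hα1 n (by omega))).1 hhomo
    refine ⟨i1, hji', ?_⟩
    intro m hm
    rcases Nat.lt_or_ge m n with h | h
    · have hgm := hgood ⟨m, h⟩
      rw [← hi1] at hgm
      exact (good_decode (fun i0 => hboundsm m h i0) (hα1 m (by omega)) i1).1 hgm
    · have : m = n := by omega
      subst this
      exact hn


/-- Main Lemma. Let `f` be an `AR^(k)`-function, and let
`⟨N_m : m ≤ n⟩` be a chain of countable elementary submodels of the universe of sets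
(equipped with membership and a well-ordering `prec`), with (a code of) `f` in `N_0`,
codes of `D⃗_0, …, D⃗_{n-1} ∈ SEQ_k(ω,ω₁)` in `N_0`, and `α_m ∈ N_{m+1} \ N_m` for
`m < n`. Then `{i < ω : ∀ m < n, α_m ∈ Homo(D⃗_m(i), f)}` is infinite. -/
theorem ar_elementary_chain_lemma (k n : ℕ) (hk : 1 ≤ k)
    (f : Ordinal.{0} → Ordinal.{0} → Ordinal.{0}) (hf : IsAR k f)
    (prec : ZFSet.{0} → ZFSet.{0} → Prop) (hwo : IsWellOrder ZFSet.{0} prec)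
    (N : ℕ → ESub prec)
    (hcount : ∀ m ≤ n, (carr (N m)).Countable)
    (hchain : ∀ m (hm : m < n),
      ctblToZF (carr (N m)) (hcount m hm.le) ∈ carr (N (m + 1)))
    (hfN : fun2ToZF f ∈ carr (N 0))
    (D : ℕ → ℕ → Finset (Finset Ordinal.{0}))
    (hD : ∀ m < n, IsSeqK k (D m))
    (hDN : ∀ m < n, seqToZF (D m) ∈ carr (N 0))
    (α : ℕ → Ordinal.{0})
    (hα1 : ∀ m < n, α m < w1)
    (hα2 : ∀ m < n, toZF (α m) ∈ carr (N (m + 1)) ∧ toZF (α m) ∉ carr (N m)) :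
    {i : ℕ | ∀ m < n, α m ∈ HomoSet (D m i) f}.Infinite := by
  apply _root_.infinite_of_forall_exists_gt
  intro j
  obtain ⟨i, h1, h2⟩ := main_aux k f hf prec n N hcount hchain hfN D hD hDN α hα1 hα2 j
  exact ⟨i, h1, h2⟩
end
end
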